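/- For n ≥ 1, let x^k_1 ≤ x^k_2 be reals for k = 1,…,n. Define t_{i1…in} = max_k x^k_{ik} for each (i1,…,in) ∈ {1,2}^n, and c(t) = Σ_{(i1,…,in)} (−1)^{n + i1 + … + in} h(t − t_{i1…in}) with h the Heaviside function. Then c(t) ≥ 0 for all t. -/
import Mathlib


noncomputable def heaviside (x : ℝ) : ℝ := if 0 ≤ x then 1 else 0

lemma heaviside_nonneg (x : ℝ) : 0 ≤ heaviside x := by
  unfold heaviside; split <;> norm_num

lemma heaviside_mono : Monotone heaviside := by
  intro a b hab
  unfold heaviside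
  split <;> split <;> simp_all <;> linarith

theorem stmt14 (n : ℕ) (hn : 0 < n) (x : Fin n → Fin 2 → ℝ)
    (hx : ∀ k, x k 0 ≤ x k 1)
    (c : ℝ → ℝ)
    (hc : ∀ t, c t = ∑ i : Fin n → Fin 2,
      (-1 : ℝ) ^ (n + ∑ k, ((i k : ℕ) + 1)) *
        heaviside (t - Finset.univ.sup' (Finset.univ_nonempty_iff.mpr ⟨⟨0, hn⟩⟩)
          (fun k => x k (i k)))) :
    ∀ t, 0 ≤ c t := by
  intro t
  rw [hc t]
  have hterm : ∀ i : Fin n → Fin 2,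
      (-1 : ℝ) ^ (n + ∑ k, ((i k : ℕ) + 1)) *
        heaviside (t - Finset.univ.sup' (Finset.univ_nonempty_iff.mpr ⟨⟨0, hn⟩⟩)
          (fun k => x k (i k)))
      = ∏ k, ((-1 : ℝ) ^ (i k : ℕ) * heaviside (t - x k (i k))) := by
    intro i
    have hsign : (-1 : ℝ) ^ (n + ∑ k, ((i k : ℕ) + 1)) = ∏ k, (-1 : ℝ) ^ (i k : ℕ) := by
      have he : (n + ∑ k, ((i k : ℕ) + 1)) = ∑ k, (i k : ℕ) + 2 * n := by
        rw [Finset.sum_add_distrib, Finset.sum_const, Finset.card_univ, Fintype.card_fin]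
        ring
      rw [he, pow_add, ← Finset.prod_pow_eq_pow_sum]
      simp [pow_mul]
    have hheav : heaviside (t - Finset.univ.sup' (Finset.univ_nonempty_iff.mpr ⟨⟨0, hn⟩⟩)
          (fun k => x k (i k))) = ∏ k, heaviside (t - x k (i k)) := by
      by_cases h : Finset.univ.sup' (Finset.univ_nonempty_iff.mpr ⟨⟨0, hn⟩⟩)
          (fun k => x k (i k)) ≤ t
      · have hall : ∀ k : Fin n, x k (i k) ≤ t := by
          intro k
          exact le_trans (Finset.le_sup' (fun k => x k (i k)) (Finset.mem_univ k)) h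
        have : ∀ k : Fin n, heaviside (t - x k (i k)) = 1 := by
          intro k; unfold heaviside; rw [if_pos (by linarith [hall k])]
        rw [Finset.prod_congr rfl (fun k _ => this k), Finset.prod_const_one]
        unfold heaviside; rw [if_pos (by linarith)]
      · rw [Finset.sup'_le_iff] at h
        push_neg at h
        obtain ⟨k, _, hk⟩ := h
        have h1 : heaviside (t - x k (i k)) = 0 := by
          unfold heaviside; rw [if_neg (by linarith)]
        have h2 : heaviside (t - Finset.univ.sup' (Finset.univ_nonempty_iff.mpr ⟨⟨0, hn⟩⟩)
            (fun k => x k (i k))) = 0 := by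
          have : x k (i k) ≤ Finset.univ.sup' (Finset.univ_nonempty_iff.mpr ⟨⟨0, hn⟩⟩)
              (fun k => x k (i k)) := Finset.le_sup' (fun k => x k (i k)) (Finset.mem_univ k)
          unfold heaviside; rw [if_neg (by linarith)]
        rw [h2]
        exact (Finset.prod_eq_zero (Finset.mem_univ k) h1).symm
    rw [hsign, hheav, ← Finset.prod_mul_distrib]
  rw [Finset.sum_congr rfl (fun i _ => hterm i),
    ← Fintype.prod_sum (fun (k : Fin n) (j : Fin 2) => (-1 : ℝ) ^ (j : ℕ) * heaviside (t - x k j))]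
  apply Finset.prod_nonneg
  intro k _
  rw [Fin.sum_univ_two]
  simp only [Fin.val_zero, Fin.val_one, pow_zero, pow_one, one_mul, neg_one_mul]
  have := heaviside_mono (show t - x k 1 ≤ t - x k 0 by linarith [hx k])
  linarith
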